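/- The interior Θ° = {θ ∈ ℝ^U : D²ψ(x|θ) is positive definite for all x ∈ [0,1]^m} of the feasible region satisfies Θ° = ⋂_{M'≥1} ⋃_{M≥max(M', U_max+1)} Θ_M°, i.e. Θ° equals the limit superior of the sets Θ_M° as M → ∞. -/

import Mathlib

open Real

/-- The potential function ψ(x|θ) of the structural gradient model. -/
noncomputable def sgmPotential (m : ℕ) (U : Finset (Fin m → ℕ)) (θ : U → ℝ)
    (x : Fin m → ℝ) : ℝ :=
  (1 / 2) * ∑ j, x j ^ 2 -
    ∑ u : U, (θ u / Real.pi ^ 2) * ∏ j, Real.cos (Real.pi * ((u : Fin m → ℕ) j : ℝ) * x j)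

/-- The Hessian matrix D²f(x). -/
noncomputable def hessian (m : ℕ) (f : (Fin m → ℝ) → ℝ) (x : Fin m → ℝ) :
    Matrix (Fin m) (Fin m) ℝ :=
  Matrix.of fun i j => fderiv ℝ (fun y => fderiv ℝ f y (Pi.single j 1)) x (Pi.single i 1)

/-- The linear map K_M on ℝ^U, (K_M θ)_u = θ_u / Π_j (1 − u_j/M). -/
noncomputable def kmap (m : ℕ) (U : Finset (Fin m → ℕ)) (M : ℕ) (θ : U → ℝ) : U → ℝ :=
  fun u => θ u / ∏ j, (1 - ((u : Fin m → ℕ) j : ℝ) / M)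

/-- The inner approximation Θ_M°: positive definiteness of D²ψ(ξ|K_Mθ) at all lattice
points ξ ∈ L_M^m where L_M = {0/M, 1/M, …, M/M}. -/
def innerApprox (m : ℕ) (U : Finset (Fin m → ℕ)) (M : ℕ) : Set (U → ℝ) :=
  {θ : U → ℝ | ∀ ξ : Fin m → ℝ,
    (∀ j, ∃ k : ℕ, k ≤ M ∧ ξ j = (k : ℝ) / M) →
    (hessian m (sgmPotential m U (kmap m U M θ)) ξ).PosDef}

/-!
Both inclusions rest on the explicit Hessian `D²ψ(x|θ) = I + ∑_u θ_u H_u(x)`, whose entries are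
`u_i u_j` times products of sines and cosines of the `π u_k x_k`.

If `θ ∈ Θ_M°` with `M > U_max`, sampling against the period-2 Fejér kernel `F_M` on the grid
`{k/M : k < 2M}^m` reproduces every frequency `u` up to the factor `∏_j (1 - u_j/M)` that `K_M`
undoes. Hence `D²ψ(x|θ)` is a convex combination of the matrices `D²ψ(K/M | K_M θ)`. The
trigonometric part of `ψ` is even and 2-periodic in each coordinate, so folding the coordinates
lying in `[1, 2]` back into `[0, 1]` conjugates such a matrix by a diagonal sign matrix; each of
them is therefore positive definite, and so is `D²ψ(x|θ)`, for every `x`.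

Conversely, positive definiteness of `D²ψ(·|θ)` on the compact cube is an open condition on `θ`
and `K_M θ → θ`, so for all large `M` the Hessians of `ψ(·|K_M θ)` at the grid points, which lie
in the cube, are positive definite.
-/

open Finset Filter Topology
open scoped Matrix

theorem Matrix.PosDef.diagonal_mul_mul_diagonal {n R : Type*} [Fintype n] [DecidableEq n]
    [CommRing R] [PartialOrder R] [StarRing R] [TrivialStar R] [NoZeroDivisors R]
    {A : Matrix n n R} (hA : A.PosDef) {d : n → R} (hd : ∀ i, d i ≠ 0) :
    (Matrix.diagonal d * A * Matrix.diagonal d).PosDef := by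
  have hinj : Function.Injective (Matrix.diagonal d).mulVec := fun v w h => by
    funext i
    simpa [Matrix.mulVec_diagonal, hd i] using congrFun h i
  simpa [Matrix.diagonal_conjTranspose] using hA.conjTranspose_mul_mul_same hinj

theorem Matrix.posDef_sum_smul {n ι : Type*} [Fintype n] {s : Finset ι} {w : ι → ℝ}
    {A : ι → Matrix n n ℝ} (hw : ∀ i ∈ s, 0 ≤ w i) (hsum : 0 < ∑ i ∈ s, w i)
    (hA : ∀ i ∈ s, (A i).PosDef) : (∑ i ∈ s, w i • A i).PosDef := by
  classical
  rw [← sum_filter_of_ne (p := fun i => 0 < w i)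
    fun i hi h => (hw i hi).lt_of_ne' fun h0 => h (by rw [h0, zero_smul])]
  refine Matrix.posDef_sum ?_ fun i hi => ?_
  · obtain ⟨i, hi, hwi⟩ := exists_lt_of_sum_lt (f := 0) (g := w) (by simpa using hsum)
    exact ⟨i, mem_filter.mpr ⟨hi, hwi⟩⟩
  · obtain ⟨hi, hwi⟩ := mem_filter.mp hi
    exact (hA i hi).smul hwi

theorem Matrix.IsHermitian.posDef_iff_forall_mem_sphere {n : Type*} [Fintype n]
    {A : Matrix n n ℝ} (hA : A.IsHermitian) :
    A.PosDef ↔ ∀ v ∈ Metric.sphere (0 : n → ℝ) 1, 0 < v ⬝ᵥ A *ᵥ v := by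
  refine ⟨fun h v hv => by
    simpa using h.dotProduct_mulVec_pos (ne_zero_of_mem_unit_sphere ⟨v, hv⟩),
    fun h => Matrix.PosDef.of_dotProduct_mulVec_pos hA fun v hv => ?_⟩
  have hnorm : 0 < ‖v‖ := norm_pos_iff.mpr hv
  have hw := h (‖v‖⁻¹ • v) (by simp [norm_smul, hnorm.ne'])
  rw [Matrix.mulVec_smul, dotProduct_smul, smul_dotProduct, smul_eq_mul, smul_eq_mul] at hw
  rw [star_trivial]
  have hinv : 0 < ‖v‖⁻¹ := by positivity
  exact (mul_pos_iff_of_pos_left hinv).mp ((mul_pos_iff_of_pos_left hinv).mp hw)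

theorem isOpen_setOf_forall_posDef {X Y n : Type*} [TopologicalSpace X] [TopologicalSpace Y]
    [Fintype n] {K : Set Y} (hK : IsCompact K) {A : X → Y → Matrix n n ℝ}
    (hA : Continuous (Function.uncurry A)) (hherm : ∀ x y, (A x y).IsHermitian) :
    IsOpen {x | ∀ y ∈ K, (A x y).PosDef} := by
  simp_rw [(hherm _ _).posDef_iff_forall_mem_sphere]
  refine isOpen_iff_mem_nhds.mpr fun x₀ hx₀ => ?_
  have hq : Continuous fun z : X × Y × (n → ℝ) => z.2.2 ⬝ᵥ A z.1 z.2.1 *ᵥ z.2.2 :=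
    continuous_snd.snd.dotProduct
      ((hA.comp (continuous_fst.prodMk continuous_snd.fst)).matrix_mulVec continuous_snd.snd)
  have := (hK.prod (isCompact_sphere (0 : n → ℝ) 1)).eventually_forall_of_forall_eventually
    (P := fun x p => 0 < p.2 ⬝ᵥ A x p.1 *ᵥ p.2)
    fun p hp => continuousAt_const.eventually_lt hq.continuousAt (hx₀ p.1 hp.1 p.2 hp.2)
  filter_upwards [this] with x hx y hy v hv using hx (y, v) ⟨hy, hv⟩

theorem fderiv_prod_apply_single {ι : Type*} [Fintype ι] [DecidableEq ι] {g : ι → ℝ → ℝ}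
    {x : ι → ℝ} (hg : ∀ k, DifferentiableAt ℝ (g k) (x k)) (j : ι) :
    fderiv ℝ (fun y => ∏ k, g k (y k)) x (Pi.single j 1)
      = deriv (g j) (x j) * ∏ k ∈ univ.erase j, g k (x k) := by
  have hg' (k : ι) : HasFDerivAt (fun y : ι → ℝ => g k (y k))
      (deriv (g k) (x k) • ContinuousLinearMap.proj k) x :=
    (hg k).hasDerivAt.comp_hasFDerivAt x (hasFDerivAt_apply (𝕜 := ℝ) k x)
  rw [(HasFDerivAt.finsetProd fun k _ => hg' k).fderiv]
  simp [Pi.single_apply, mul_comm]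

theorem min_div_two_sub_div {M k : ℕ} (hM : M ≠ 0) (hk : k ≤ 2 * M) :
    min ((k : ℝ) / M) (2 - k / M) = (min k (2 * M - k) : ℕ) / M := by
  have hM' : (0 : ℝ) < M := by positivity
  rw [Nat.cast_min, Nat.cast_sub hk, ← min_div_div_right hM'.le]
  congr 1
  field_simp
  push_cast
  ring

theorem sum_range_exp_pi_mul_I {M : ℕ} (hM : M ≠ 0) {r : ℤ} (hr : r.natAbs < 2 * M) :
    ∑ k ∈ range (2 * M), Complex.exp (π * r * k / M * Complex.I)
      = if r = 0 then ((2 * M : ℕ) : ℂ) else 0 := by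
  split_ifs with h0
  · simp [h0]
  set ζ := Complex.exp (2 * π * Complex.I / (2 * M : ℕ))
  have hζ : IsPrimitiveRoot ζ (2 * M) := Complex.isPrimitiveRoot_exp _ (by omega)
  have hpow (k : ℕ) : Complex.exp (π * r * k / M * Complex.I) = (ζ ^ r) ^ k := by
    rw [← Complex.exp_int_mul, ← Complex.exp_nat_mul]
    congr 1
    push_cast
    field_simp
  have hne : ζ ^ r ≠ 1 := by
    rw [Ne, hζ.zpow_eq_one_iff_dvd]
    intro hdvd
    have := Nat.le_of_dvd (Int.natAbs_pos.mpr h0) (Int.natAbs_dvd_natAbs.mpr hdvd)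
    simp only [Nat.cast_mul, Nat.cast_ofNat] at this
    omega
  have hone : (ζ ^ r) ^ (2 * M) = 1 := by
    rw [← zpow_natCast, ← zpow_mul, mul_comm, zpow_mul, hζ.zpow_eq_one, one_zpow]
  simp_rw [hpow, geom_sum_eq hne, hone, sub_self, zero_div]

noncomputable def fejerKernel (M : ℕ) (y : ℝ) : ℝ :=
  (1 / M) * Complex.normSq (∑ n ∈ range M, Complex.exp (π * n * y * Complex.I))

theorem fejerKernel_nonneg (M : ℕ) (y : ℝ) : 0 ≤ fejerKernel M y :=
  mul_nonneg (by positivity) (Complex.normSq_nonneg _)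

theorem ofReal_fejerKernel (M : ℕ) (y : ℝ) :
    (fejerKernel M y : ℂ) = (1 / M) * ∑ n ∈ range M, ∑ n' ∈ range M,
      Complex.exp (π * ((n : ℂ) - n') * y * Complex.I) := by
  rw [fejerKernel, Complex.ofReal_mul, ← Complex.mul_conj, map_sum, sum_mul_sum]
  push_cast
  congr 1
  refine sum_congr rfl fun n _ => sum_congr rfl fun n' _ => ?_
  rw [← Complex.exp_conj, ← Complex.exp_add]
  congr 1
  simp only [map_mul, Complex.conj_ofReal, Complex.conj_natCast, Complex.conj_I]
  ring

theorem sum_fejerKernel_mul_exp {M : ℕ} (hM : M ≠ 0) {u : ℕ} (hu : u < M) (x : ℝ) :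
    ∑ k ∈ range (2 * M),
        (fejerKernel M (x - k / M) : ℂ) * Complex.exp (π * u * k / M * Complex.I)
      = 2 * (M - u) * Complex.exp (π * u * x * Complex.I) := by
  calc _ = (1 / M) * ∑ n ∈ range M, ∑ n' ∈ range M,
          Complex.exp (π * ((n : ℂ) - n') * x * Complex.I) *
            ∑ k ∈ range (2 * M), Complex.exp (π * ((u + n' - n : ℤ) : ℂ) * k / M * Complex.I) := by
        simp_rw [ofReal_fejerKernel, mul_sum, sum_mul]
        rw [sum_comm]
        refine sum_congr rfl fun n _ => ?_
        rw [sum_comm]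
        refine sum_congr rfl fun n' _ => sum_congr rfl fun k _ => ?_
        rw [mul_assoc, ← Complex.exp_add, ← Complex.exp_add]
        congr 2
        push_cast
        ring
    _ = (1 / M) * ∑ n' ∈ range M, ∑ n ∈ range M,
          if n = u + n' then 2 * M * Complex.exp (π * u * x * Complex.I) else 0 := by
        rw [sum_comm]
        refine congrArg _ (sum_congr rfl fun n' hn' => sum_congr rfl fun n hn => ?_)
        rw [mem_range] at hn hn'
        rw [sum_range_exp_pi_mul_I hM (by omega)]
        split_ifs with h1 h2 h2
        · subst h2
          push_cast
          field_simp
          ring_nf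
        · omega
        · omega
        · simp
    _ = _ := by
        simp_rw [sum_ite_eq', mem_range, sum_ite, sum_const_zero, add_zero, sum_const]
        have hcard : #{n ∈ range M | u + n < M} = M - u := by
          rw [show {n ∈ range M | u + n < M} = range (M - u) by ext; simp; omega, card_range]
        rw [hcard, nsmul_eq_mul, Nat.cast_sub hu.le]
        field_simp

theorem sum_fejerKernel_mul_cos {M : ℕ} (hM : M ≠ 0) {u : ℕ} (hu : u < M) (x φ : ℝ) :
    ∑ k ∈ range (2 * M), fejerKernel M (x - k / M) * cos (π * u * (k / M) + φ)
      = 2 * (M - u) * cos (π * u * x + φ) := by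
  have hre (c a : ℝ) :
      (c * Complex.exp (π * u * a * Complex.I) * Complex.exp (φ * Complex.I)).re
        = c * cos (π * u * a + φ) := by
    rw [mul_assoc, ← Complex.exp_add, Complex.re_ofReal_mul, ← Complex.exp_ofReal_mul_I_re]
    push_cast
    ring_nf
  have h := congrArg (fun z => (z * Complex.exp (φ * Complex.I)).re)
    (sum_fejerKernel_mul_exp hM hu x)
  simp only [sum_mul, Complex.re_sum] at h
  convert h using 1
  · refine sum_congr rfl fun k _ => ?_
    rw [← hre]
    push_cast
    ring_nf
  · rw [← hre]
    push_cast
    ring_nf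

section

variable {m : ℕ}

noncomputable def trigFactor (u : Fin m → ℕ) (S : Finset (Fin m)) (k : Fin m) (t : ℝ) : ℝ :=
  if k ∈ S then sin (π * u k * t) else cos (π * u k * t)

theorem hasDerivAt_trigFactor (u : Fin m → ℕ) (S : Finset (Fin m)) (k : Fin m) (t : ℝ) :
    HasDerivAt (trigFactor u S k)
      (π * u k * if k ∈ S then cos (π * u k * t) else -sin (π * u k * t)) t := by
  have h : HasDerivAt (fun t => π * u k * t) (π * u k) t := by
    simpa using (hasDerivAt_id t).const_mul (π * u k)
  unfold trigFactor
  split_ifs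
  · simpa [mul_comm] using h.sin
  · simpa [mul_comm] using h.cos

@[fun_prop]
theorem differentiable_trigFactor (u : Fin m → ℕ) (S : Finset (Fin m)) (k : Fin m) :
    Differentiable ℝ (trigFactor u S k) := fun t =>
  (hasDerivAt_trigFactor u S k t).differentiableAt

theorem trigFactor_eq_cos (u : Fin m → ℕ) (S : Finset (Fin m)) (k : Fin m) (t : ℝ) :
    trigFactor u S k t = cos (π * u k * t + if k ∈ S then -(π / 2) else 0) := by
  unfold trigFactor
  split_ifs
  · rw [← sub_eq_add_neg, cos_sub_pi_div_two]
  · rw [add_zero]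

theorem trigFactor_two_sub (u : Fin m → ℕ) (S : Finset (Fin m)) (k : Fin m) (t : ℝ) :
    trigFactor u S k (2 - t) = (if k ∈ S then -1 else 1) * trigFactor u S k t := by
  have h : π * u k * (2 - t) = u k * (2 * π) - π * u k * t := by ring
  unfold trigFactor
  split_ifs <;> simp [h, sin_nat_mul_two_pi_sub, cos_nat_mul_two_pi_sub]

noncomputable def trigMonomial (u : Fin m → ℕ) (S : Finset (Fin m)) (x : Fin m → ℝ) : ℝ :=
  ∏ k, trigFactor u S k (x k)

@[fun_prop]
theorem differentiable_trigMonomial (u : Fin m → ℕ) (S : Finset (Fin m)) :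
    Differentiable ℝ (trigMonomial u S) := by
  unfold trigMonomial
  fun_prop

theorem continuous_trigMonomial (u : Fin m → ℕ) (S : Finset (Fin m)) :
    Continuous (trigMonomial u S) :=
  (differentiable_trigMonomial u S).continuous

theorem fderiv_trigMonomial_apply_single (u : Fin m → ℕ) (S : Finset (Fin m)) (x : Fin m → ℝ)
    (j : Fin m) :
    fderiv ℝ (trigMonomial u S) x (Pi.single j 1) = π * u j *
      if j ∈ S then trigMonomial u (S.erase j) x else -trigMonomial u (insert j S) x := by
  have hoff (T : Finset (Fin m)) (hT : ∀ k ≠ j, (k ∈ T ↔ k ∈ S)) : trigMonomial u T x =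
      trigFactor u T j (x j) * ∏ k ∈ univ.erase j, trigFactor u S k (x k) := by
    rw [trigMonomial, ← mul_prod_erase univ _ (mem_univ j)]
    exact congrArg _ (prod_congr rfl fun k hk => by
      simp only [trigFactor, hT k (ne_of_mem_erase hk)])
  change fderiv ℝ (fun y => ∏ k, trigFactor u S k (y k)) x (Pi.single j 1) = _
  rw [fderiv_prod_apply_single (fun k => (hasDerivAt_trigFactor u S k _).differentiableAt),
    (hasDerivAt_trigFactor u S j _).deriv]
  split_ifs <;> rw [hoff _ fun k hk => by simp [hk]] <;> simp [trigFactor, mul_assoc]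

noncomputable def trigHessian (u : Fin m → ℕ) (x : Fin m → ℝ) : Matrix (Fin m) (Fin m) ℝ :=
  Matrix.of fun i j => u i * u j * if i = j then trigMonomial u ∅ x else -trigMonomial u {i, j} x

theorem continuous_trigHessian (u : Fin m → ℕ) : Continuous (trigHessian u) :=
  continuous_matrix fun i j => by
    simp only [trigHessian, Matrix.of_apply]
    split_ifs
    exacts [continuous_const.mul (continuous_trigMonomial u ∅),
      continuous_const.mul (continuous_trigMonomial u {i, j}).neg]

theorem isHermitian_trigHessian (u : Fin m → ℕ) (x : Fin m → ℝ) :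
    (trigHessian u x).IsHermitian := by
  ext i j
  simp only [Matrix.conjTranspose_apply, trigHessian, Matrix.of_apply, star_trivial, pair_comm j i,
    eq_comm (a := j)]
  ring

theorem sum_fejerKernel_mul_trigFactor {M : ℕ} (hM : M ≠ 0) {u : Fin m → ℕ} {k : Fin m}
    (hu : u k < M) (S : Finset (Fin m)) (t : ℝ) :
    ∑ n ∈ range (2 * M), fejerKernel M (t - n / M) / (2 * M) * trigFactor u S k (n / M)
      = (1 - u k / M) * trigFactor u S k t := by
  simp_rw [trigFactor_eq_cos, div_mul_eq_mul_div, ← sum_div, sum_fejerKernel_mul_cos hM hu]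
  field_simp

noncomputable def fejerWeight (M : ℕ) (x : Fin m → ℝ) (K : Fin m → ℕ) : ℝ :=
  ∏ l, fejerKernel M (x l - K l / M) / (2 * M)

theorem fejerWeight_nonneg (M : ℕ) (x : Fin m → ℝ) (K : Fin m → ℕ) : 0 ≤ fejerWeight M x K :=
  prod_nonneg fun l _ => div_nonneg (fejerKernel_nonneg _ _) (by positivity)

theorem sum_fejerWeight_mul_trigMonomial {M : ℕ} (hM : M ≠ 0) {u : Fin m → ℕ}
    (hu : ∀ j, u j < M) (S : Finset (Fin m)) (x : Fin m → ℝ) :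
    ∑ K ∈ Fintype.piFinset fun _ => range (2 * M),
        fejerWeight M x K * trigMonomial u S (fun l => K l / M)
      = (∏ j, (1 - (u j : ℝ) / M)) * trigMonomial u S x := by
  simp_rw [fejerWeight, trigMonomial, ← prod_mul_distrib]
  rw [← prod_univ_sum (fun _ => range (2 * M))
    (fun l n => fejerKernel M (x l - n / M) / (2 * M) * trigFactor u S l (n / M))]
  simp_rw [sum_fejerKernel_mul_trigFactor hM (hu _)]

theorem sum_fejerWeight {M : ℕ} (hM : M ≠ 0) (x : Fin m → ℝ) :
    ∑ K ∈ Fintype.piFinset (fun _ => range (2 * M)), fejerWeight M x K = 1 := by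
  simpa [trigMonomial, trigFactor] using
    sum_fejerWeight_mul_trigMonomial hM (u := 0) (fun _ => Nat.pos_of_ne_zero hM) ∅ x

theorem sum_fejerWeight_smul_trigHessian {M : ℕ} (hM : M ≠ 0) {u : Fin m → ℕ}
    (hu : ∀ j, u j < M) (x : Fin m → ℝ) :
    ∑ K ∈ Fintype.piFinset fun _ => range (2 * M),
        fejerWeight M x K • trigHessian u (fun l => K l / M)
      = (∏ j, (1 - (u j : ℝ) / M)) • trigHessian u x := by
  ext i j
  simp only [Matrix.sum_apply, Matrix.smul_apply, trigHessian, Matrix.of_apply, smul_eq_mul]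
  split_ifs
  · simp_rw [mul_left_comm _ (_ * _ : ℝ), ← mul_sum, sum_fejerWeight_mul_trigMonomial hM hu]
  · simp_rw [mul_left_comm _ (_ * _ : ℝ), ← mul_sum, mul_neg, sum_neg_distrib,
      sum_fejerWeight_mul_trigMonomial hM hu]
    ring

noncomputable def foldUnitCube (x : Fin m → ℝ) : Fin m → ℝ := fun l => min (x l) (2 - x l)

noncomputable def foldSign (x : Fin m → ℝ) (l : Fin m) : ℝ := if x l ≤ 1 then 1 else -1

theorem foldSign_mul_self (x : Fin m → ℝ) (l : Fin m) : foldSign x l * foldSign x l = 1 := by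
  unfold foldSign
  split_ifs <;> norm_num

theorem trigFactor_eq_foldSign_mul (u : Fin m → ℕ) (S : Finset (Fin m)) (x : Fin m → ℝ)
    (k : Fin m) :
    trigFactor u S k (x k)
      = (if k ∈ S then foldSign x k else 1) * trigFactor u S k (foldUnitCube x k) := by
  unfold foldSign foldUnitCube
  by_cases hx : x k ≤ 1
  · rw [min_eq_left (by linarith)]
    simp [hx]
  · rw [min_eq_right (by linarith), trigFactor_two_sub, ← mul_assoc]
    split_ifs <;> norm_num

theorem trigMonomial_eq_prod_foldSign_mul (u : Fin m → ℕ) (S : Finset (Fin m)) (x : Fin m → ℝ) :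
    trigMonomial u S x = (∏ l ∈ S, foldSign x l) * trigMonomial u S (foldUnitCube x) := by
  unfold trigMonomial
  simp_rw [trigFactor_eq_foldSign_mul u S x]
  rw [prod_mul_distrib, prod_ite_mem, univ_inter]

theorem trigHessian_eq_diagonal_mul_mul_diagonal (u : Fin m → ℕ) (x : Fin m → ℝ) :
    trigHessian u x = Matrix.diagonal (foldSign x) * trigHessian u (foldUnitCube x)
      * Matrix.diagonal (foldSign x) := by
  ext i j
  simp only [Matrix.diagonal_mul, Matrix.mul_diagonal, trigHessian, Matrix.of_apply]
  rw [trigMonomial_eq_prod_foldSign_mul u ∅ x, trigMonomial_eq_prod_foldSign_mul u {i, j} x,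
    prod_empty, one_mul]
  split_ifs with hij
  · subst hij
    linear_combination -(u i * u i * trigMonomial u ∅ (foldUnitCube x)) * foldSign_mul_self x i
  · rw [prod_pair hij]
    ring

variable {U : Finset (Fin m → ℕ)}

theorem sgmPotential_eq_trigMonomial (θ : U → ℝ) : sgmPotential m U θ =
    fun x => (1 / 2) * ∑ j, x j ^ 2 - ∑ u : U, (θ u / π ^ 2) * trigMonomial u ∅ x := by
  funext x
  simp [sgmPotential, trigMonomial, trigFactor]

theorem fderiv_sgmPotential_apply_single (θ : U → ℝ) (y : Fin m → ℝ) (j : Fin m) :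
    fderiv ℝ (sgmPotential m U θ) y (Pi.single j 1)
      = y j + ∑ u : U, θ u * u.1 j / π * trigMonomial u {j} y := by
  have hproj (i : Fin m) : fderiv ℝ (fun x : Fin m → ℝ => x i) y = ContinuousLinearMap.proj i :=
    (hasFDerivAt_apply i y).fderiv
  rw [sgmPotential_eq_trigMonomial]
  simp (disch := fun_prop) only [one_div, univ_eq_attach, fderiv_fun_sub, fderiv_const_mul,
    fderiv_fun_sum, fderiv_fun_pow, Nat.add_one_sub_one, pow_one, nsmul_eq_mul, Nat.cast_ofNat,
    hproj, sub_apply, smul_apply, _root_.sum_apply, ContinuousLinearMap.proj_apply,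
    Pi.single_apply, smul_eq_mul, mul_ite, mul_one, mul_zero, sum_ite_eq', mem_univ, ↓reduceIte,
    fderiv_trigMonomial_apply_single, notMem_empty, insert_empty_eq, mul_neg, sum_neg_distrib,
    sub_neg_eq_add]
  congr 1
  · ring
  · exact sum_congr rfl fun u _ => by field_simp

theorem hessian_sgmPotential (θ : U → ℝ) (x : Fin m → ℝ) :
    hessian m (sgmPotential m U θ) x = 1 + ∑ u : U, θ u • trigHessian u x := by
  have hproj (j : Fin m) : fderiv ℝ (fun x : Fin m → ℝ => x j) x = ContinuousLinearMap.proj j :=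
    (hasFDerivAt_apply j x).fderiv
  ext i j
  simp only [hessian, Matrix.of_apply, fderiv_sgmPotential_apply_single]
  simp (disch := fun_prop) only [univ_eq_attach, fderiv_fun_add, hproj, fderiv_fun_sum,
    fderiv_const_mul, add_apply, ContinuousLinearMap.proj_apply, Pi.single_apply, _root_.sum_apply,
    smul_apply, fderiv_trigMonomial_apply_single, mem_singleton, mul_ite, mul_neg, smul_eq_mul,
    sum_ite_irrel, sum_neg_distrib, trigHessian, Matrix.smul_of, Matrix.add_apply, Matrix.one_apply,
    Matrix.sum_apply, Matrix.of_apply, Pi.smul_apply]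
  rcases eq_or_ne i j with rfl | hij
  · simp only [if_true, erase_singleton]
    exact congrArg _ (sum_congr rfl fun u _ => by field_simp)
  · simp only [hij, hij.symm, if_false, zero_add, neg_inj]
    exact sum_congr rfl fun u _ => by field_simp

theorem isHermitian_hessian_sgmPotential (θ : U → ℝ) (x : Fin m → ℝ) :
    (hessian m (sgmPotential m U θ) x).IsHermitian := by
  rw [hessian_sgmPotential]
  exact Matrix.isHermitian_one.add
    (isSelfAdjoint_sum _ fun u _ => (isHermitian_trigHessian u.1 x).smul (IsSelfAdjoint.all _))

theorem hessian_sgmPotential_eq_diagonal_mul_mul_diagonal (θ : U → ℝ) (x : Fin m → ℝ) :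
    hessian m (sgmPotential m U θ) x = Matrix.diagonal (foldSign x)
      * hessian m (sgmPotential m U θ) (foldUnitCube x) * Matrix.diagonal (foldSign x) := by
  simp_rw [hessian_sgmPotential, mul_add, add_mul, mul_one, Matrix.diagonal_mul_diagonal,
    foldSign_mul_self, Matrix.diagonal_one, mul_sum, sum_mul, Matrix.mul_smul, Matrix.smul_mul,
    ← trigHessian_eq_diagonal_mul_mul_diagonal]

theorem kmap_mul_prod {M : ℕ} (θ : U → ℝ) {u : U} (hu : ∀ j, u.1 j < M) :
    kmap m U M θ u * ∏ j, (1 - (u.1 j : ℝ) / M) = θ u := by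
  refine div_mul_cancel₀ _ (prod_ne_zero_iff.mpr fun j _ => sub_ne_zero.mpr (ne_of_gt ?_))
  rw [div_lt_one (by exact_mod_cast (Nat.zero_le _).trans_lt (hu j))]
  exact_mod_cast hu j

theorem hessian_sgmPotential_eq_sum_fejerWeight_smul {M : ℕ} (hM : M ≠ 0)
    (hU : ∀ u ∈ U, ∀ j, u j < M) (θ : U → ℝ) (x : Fin m → ℝ) :
    hessian m (sgmPotential m U θ) x
      = ∑ K ∈ Fintype.piFinset fun _ => range (2 * M),
          fejerWeight M x K • hessian m (sgmPotential m U (kmap m U M θ)) (fun l => K l / M) := by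
  simp_rw [hessian_sgmPotential, smul_add, sum_add_distrib, ← sum_smul, sum_fejerWeight hM,
    one_smul, smul_sum, smul_comm (fejerWeight M x _)]
  rw [sum_comm]
  simp_rw [← smul_sum, sum_fejerWeight_smul_trigHessian hM (hU _ (Subtype.prop _)), smul_smul,
    kmap_mul_prod θ (hU _ (Subtype.prop _))]

theorem posDef_hessian_of_mem_innerApprox {M : ℕ} (hM : M ≠ 0) (hU : ∀ u ∈ U, ∀ j, u j < M)
    {θ : U → ℝ} (hθ : θ ∈ innerApprox m U M) (x : Fin m → ℝ) :
    (hessian m (sgmPotential m U θ) x).PosDef := by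
  rw [hessian_sgmPotential_eq_sum_fejerWeight_smul hM hU]
  refine Matrix.posDef_sum_smul (fun K _ => fejerWeight_nonneg M x K)
    (by rw [sum_fejerWeight hM]; exact one_pos) fun K hK => ?_
  rw [hessian_sgmPotential_eq_diagonal_mul_mul_diagonal]
  refine (hθ _ fun l => ?_).diagonal_mul_mul_diagonal
    fun l => left_ne_zero_of_mul_eq_one (foldSign_mul_self _ l)
  have hKl : K l < 2 * M := by simpa using Fintype.mem_piFinset.mp hK l
  exact ⟨_, by omega, min_div_two_sub_div hM hKl.le⟩

theorem isOpen_setOf_forall_mem_Icc_posDef_hessian :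
    IsOpen {θ : U → ℝ |
      ∀ x ∈ Set.Icc (0 : Fin m → ℝ) 1, (hessian m (sgmPotential m U θ) x).PosDef} := by
  refine isOpen_setOf_forall_posDef isCompact_Icc ?_ isHermitian_hessian_sgmPotential
  simp_rw [Function.uncurry_def, hessian_sgmPotential]
  exact continuous_const.add (continuous_finsetSum _ fun u _ =>
    ((continuous_apply u).comp continuous_fst).smul
      ((continuous_trigHessian u.1).comp continuous_snd))

theorem tendsto_kmap (θ : U → ℝ) : Tendsto (fun M => kmap m U M θ) atTop (𝓝 θ) := by
  refine tendsto_pi_nhds.mpr fun u => ?_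
  have h := tendsto_finsetProd (univ : Finset (Fin m)) fun j _ =>
    (tendsto_const_div_atTop_nhds_zero_nat (u.1 j : ℝ)).const_sub 1
  have h' := (tendsto_const_nhds (x := θ u)).div h (by simp)
  rw [show ∏ j : Fin m, (1 - (0 : ℝ)) = 1 by simp, div_one] at h'
  exact h'

theorem mem_innerApprox_of_forall_mem_Icc {M : ℕ} {θ : U → ℝ}
    (h : ∀ x ∈ Set.Icc (0 : Fin m → ℝ) 1, (hessian m (sgmPotential m U (kmap m U M θ)) x).PosDef) :
    θ ∈ innerApprox m U M := by
  intro ξ hξ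
  refine h ξ ⟨fun j => ?_, fun j => ?_⟩ <;> obtain ⟨k, hkM, hk⟩ := hξ j <;>
    simp only [Pi.zero_apply, Pi.one_apply, hk]
  · positivity
  · exact div_le_one_of_le₀ (by exact_mod_cast hkM) (Nat.cast_nonneg M)

theorem eventually_mem_innerApprox {θ : U → ℝ}
    (hθ : ∀ x ∈ Set.Icc (0 : Fin m → ℝ) 1, (hessian m (sgmPotential m U θ) x).PosDef) :
    ∀ᶠ M in atTop, θ ∈ innerApprox m U M :=
  ((tendsto_kmap θ).eventually (isOpen_setOf_forall_mem_Icc_posDef_hessian.mem_nhds hθ)).mono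
    fun _ => mem_innerApprox_of_forall_mem_Icc

end

theorem interior_eq_limsup_inner_approx_general (m : ℕ)
    (U : Finset (Fin m → ℕ)) :
    {θ : U → ℝ | ∀ x ∈ Set.Icc (0 : Fin m → ℝ) 1,
        (hessian m (sgmPotential m U θ) x).PosDef}
      = ⋂ M' : ℕ, ⋃ M : ℕ,
          ⋃ (_ : M' ≤ M ∧ ∀ u ∈ U, ∀ j, u j < M), innerApprox m U M := by
  ext θ
  simp only [Set.mem_iInter, Set.mem_iUnion, exists_prop]
  constructor
  · intro hθ M'
    have hfreq : ∀ᶠ M in atTop, ∀ u ∈ U, ∀ j, u j < M :=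
      (eventually_all_finset U).mpr fun u _ =>
        eventually_all.mpr fun j => eventually_gt_atTop (u j)
    obtain ⟨M, hM', hfreqM, hmem⟩ :=
      ((eventually_ge_atTop M').and (hfreq.and (eventually_mem_innerApprox hθ))).exists
    exact ⟨M, ⟨hM', hfreqM⟩, hmem⟩
  · rintro h x -
    obtain ⟨M, ⟨hM, hU⟩, hmem⟩ := h 1
    exact posDef_hessian_of_mem_innerApprox (by omega) hU hmem x

/-- The interior Θ° of the feasible region equals the limit superior of the inner
approximations Θ_M° as M → ∞. -/
theorem interior_eq_limsup_inner_approx (m : ℕ) (hm : 0 < m)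
    (U : Finset (Fin m → ℕ)) :
    {θ : U → ℝ | ∀ x ∈ Set.Icc (0 : Fin m → ℝ) 1,
        (hessian m (sgmPotential m U θ) x).PosDef}
      = ⋂ M' : ℕ, ⋃ M : ℕ,
          ⋃ (_ : M' ≤ M ∧ ∀ u ∈ U, ∀ j, u j < M), innerApprox m U M :=
  interior_eq_limsup_inner_approx_general m U
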